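/- If Λ is a finite nonempty set of modal formulas closed under subformulas, then PLV(Λ) = PLV'(Λ). -/
import Mathlib


/-- Modal formulas over signature Σ = {¬, □, →, ∨, ∧}. -/
inductive MF
  | var : ℕ → MF
  | neg : MF → MF
  | box : MF → MF
  | imp : MF → MF → MF
  | dis : MF → MF → MF
  | con : MF → MF → MF
deriving DecidableEq

/-- The three truth values 0, 1, 2. -/
inductive V3
  | z | o | t
deriving DecidableEq

/-- Designated values D = {1, 2}. -/
def Des : Set V3 := {V3.o, V3.t}

def negOp : V3 → Set V3
  | .z => {.o, .t}
  | .o => {.z}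
  | .t => {.z}

def boxOp : V3 → Set V3
  | .z => {.z}
  | .o => {.z}
  | .t => {.t}

def impOp : V3 → V3 → Set V3
  | .z, .z => {.o, .t}
  | .z, .o => {.o, .t}
  | .z, .t => {.t}
  | .o, .z => {.z}
  | .o, .o => {.o, .t}
  | .o, .t => {.t}
  | .t, .z => {.z}
  | .t, .o => {.o}
  | .t, .t => {.t}

def disOp : V3 → V3 → Set V3
  | .z, .z => {.z}
  | .z, .o => {.o, .t}
  | .o, .z => {.o, .t}
  | .o, .o => {.o, .t}
  | _, _ => {.t}

def conOp : V3 → V3 → Set V3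
  | .z, _ => {.z}
  | _, .z => {.z}
  | .t, .t => {.t}
  | _, _ => {.o}

/-- Valuations over the reduced Nmatrix M'_S4. -/
def IsVal (v : MF → V3) : Prop :=
  (∀ α, v (.neg α) ∈ negOp (v α)) ∧
  (∀ α, v (.box α) ∈ boxOp (v α)) ∧
  (∀ α β, v (.imp α β) ∈ impOp (v α) (v β)) ∧
  (∀ α β, v (.dis α β) ∈ disOp (v α) (v β)) ∧
  (∀ α β, v (.con α β) ∈ conOp (v α) (v β))

/-- The levels L_k. -/
def LevelS4 : ℕ → Set (MF → V3)
  | 0 => {v | IsVal v}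
  | (k+1) => {v ∈ LevelS4 k | ∀ α, (∀ w ∈ LevelS4 k, w α ∈ Des) → v α = V3.t}

/-- Level valuations L'_S4 = ⋂_{k ≥ 0} L_k. -/
def LVS4 : Set (MF → V3) := ⋂ k, LevelS4 k

/-- Theorems of the Hilbert calculus H_S4 : classical propositional axioms over
{¬,→,∨,∧}, plus K, T, 4, with modus ponens and necessitation. -/
inductive S4Thm : MF → Prop
  | ax1 (α β : MF) : S4Thm (α.imp (β.imp α))
  | ax2 (α β γ : MF) : S4Thm ((α.imp (β.imp γ)).imp ((α.imp β).imp (α.imp γ)))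
  | ax3 (α β : MF) : S4Thm (α.imp (β.imp (α.con β)))
  | ax4 (α β : MF) : S4Thm ((α.con β).imp α)
  | ax5 (α β : MF) : S4Thm ((α.con β).imp β)
  | ax6 (α β : MF) : S4Thm (α.imp (α.dis β))
  | ax7 (α β : MF) : S4Thm (β.imp (α.dis β))
  | ax8 (α β γ : MF) : S4Thm ((α.imp γ).imp ((β.imp γ).imp ((α.dis β).imp γ)))
  | ax9 (α β : MF) : S4Thm ((β.imp α).imp ((β.imp α.neg).imp β.neg))
  | ax10 (α β : MF) : S4Thm (α.imp (α.neg.imp β))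
  | dne (α : MF) : S4Thm (α.neg.neg.imp α)
  | axK (α β : MF) : S4Thm ((α.imp β).box.imp (α.box.imp β.box))
  | axT (α : MF) : S4Thm (α.box.imp α)
  | axFour (α : MF) : S4Thm (α.box.imp α.box.box)
  | mp {α β : MF} : S4Thm (α.imp β) → S4Thm α → S4Thm β
  | nec {α : MF} : S4Thm α → S4Thm α.box

/-- Γ ⊢_S4 φ : either φ is a theorem, or some β₁,…,βₙ ∈ Γ (n ≥ 1) give a theorem
β₁ → (β₂ → (… → (βₙ → φ)…)). -/
def S4Deriv (Γ : Set MF) (φ : MF) : Prop :=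
  S4Thm φ ∨ ∃ l : List MF, l ≠ [] ∧ (∀ β ∈ l, β ∈ Γ) ∧ S4Thm (l.foldr MF.imp φ)

/-- Δ is φ-saturated (w.r.t. ⊢_S4). -/
def SatS4 (Δ : Set MF) (φ : MF) : Prop :=
  ¬ S4Deriv Δ φ ∧ ∀ α ∉ Δ, S4Deriv (insert α Δ) φ

open Classical in
/-- The canonical function v_Δ. -/
noncomputable def vDeltaS4 (Δ : Set MF) : MF → V3 :=
  fun α => if MF.box α ∈ Δ then V3.t else if α ∈ Δ then V3.o else V3.z

/-- Λ is closed under (immediate, hence all) subformulas. -/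
def SubClosed (Λ : Set MF) : Prop :=
  (∀ α, MF.neg α ∈ Λ → α ∈ Λ) ∧
  (∀ α, MF.box α ∈ Λ → α ∈ Λ) ∧
  (∀ α β, MF.imp α β ∈ Λ → α ∈ Λ ∧ β ∈ Λ) ∧
  (∀ α β, MF.dis α β ∈ Λ → α ∈ Λ ∧ β ∈ Λ) ∧
  (∀ α β, MF.con α β ∈ Λ → α ∈ Λ ∧ β ∈ Λ)

/-- Partial valuations with domain Λ (modelled as total functions constrained on Λ). -/
def IsPVal (Λ : Set MF) (v : MF → V3) : Prop :=
  (∀ α, MF.neg α ∈ Λ → v (.neg α) ∈ negOp (v α)) ∧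
  (∀ α, MF.box α ∈ Λ → v (.box α) ∈ boxOp (v α)) ∧
  (∀ α β, MF.imp α β ∈ Λ → v (.imp α β) ∈ impOp (v α) (v β)) ∧
  (∀ α β, MF.dis α β ∈ Λ → v (.dis α β) ∈ disOp (v α) (v β)) ∧
  (∀ α β, MF.con α β ∈ Λ → v (.con α β) ∈ conOp (v α) (v β))

/-- PLV'(Λ): partial' level valuations over Λ (witnesses amongst level valuations). -/
def PLV' (Λ : Set MF) : Set (MF → V3) :=
  {v | IsPVal Λ v ∧ ∀ α ∈ Λ, v α = V3.o →
    ∃ w ∈ LVS4, w α = V3.z ∧ ∀ β ∈ Λ, v β = V3.t → w β = V3.t}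

/-- PLV(Λ): partial level valuations over Λ, defined as the largest subset of
PV(Λ) whose condition is witnessed inside itself. -/
def PLV (Λ : Set MF) : Set (MF → V3) :=
  ⋃₀ {S | (∀ v ∈ S, IsPVal Λ v) ∧
      ∀ v ∈ S, ∀ α ∈ Λ, v α = V3.o →
        ∃ w ∈ S, w α = V3.z ∧ ∀ β ∈ Λ, v β = V3.t → w β = V3.t}

/-- Set of subformulas of a modal formula. -/
def MF.subf : MF → Finset MF
  | .var n => {.var n}
  | .neg α => insert (.neg α) α.subf
  | .box α => insert (.box α) α.subf
  | .imp α β => insert (.imp α β) (α.subf ∪ β.subf)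
  | .dis α β => insert (.dis α β) (α.subf ∪ β.subf)
  | .con α β => insert (.con α β) (α.subf ∪ β.subf)

/-! ### Auxiliary development -/

section Aux

lemma not_mem_Des_iff (x : V3) : x ∉ Des ↔ x = V3.z := by
  cases x <;> simp [Des]

lemma mem_Des_iff (x : V3) : x ∈ Des ↔ x = V3.o ∨ x = V3.t := by
  cases x <;> simp [Des]

lemma level_succ_subset (k : ℕ) : LevelS4 (k + 1) ⊆ LevelS4 k := fun _ hv => hv.1

lemma level_antitone : ∀ {j k : ℕ}, j ≤ k → LevelS4 k ⊆ LevelS4 j := by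
  intro j k
  induction k with
  | zero => intro h; interval_cases j; exact Set.Subset.rfl
  | succ n ih =>
      intro h
      rcases Nat.le_succ_iff.mp h with h' | h'
      · exact (level_succ_subset n).trans (ih h')
      · subst h'; exact Set.Subset.rfl

lemma level_isVal {k : ℕ} {v : MF → V3} (h : v ∈ LevelS4 k) : IsVal v :=
  level_antitone (Nat.zero_le k) h

lemma mem_LVS4_iff {v : MF → V3} : v ∈ LVS4 ↔ ∀ k, v ∈ LevelS4 k := Set.mem_iInter

/-! ### Kripke semantics -/

variable {W : Type}

/-- Truth in a Kripke model. -/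
def Tr (R : W → W → Prop) (Vf : W → ℕ → Prop) : MF → W → Prop
  | .var n, x => Vf x n
  | .neg a, x => ¬ Tr R Vf a x
  | .box a, x => ∀ y, R x y → Tr R Vf a y
  | .imp a b, x => Tr R Vf a x → Tr R Vf b x
  | .dis a b, x => Tr R Vf a x ∨ Tr R Vf b x
  | .con a b, x => Tr R Vf a x ∧ Tr R Vf b x

open Classical in
/-- The valuation induced by a world of a Kripke model. -/
noncomputable def kv (R : W → W → Prop) (Vf : W → ℕ → Prop) (x : W) : MF → V3 :=
  fun γ => if Tr R Vf (.box γ) x then V3.t else if Tr R Vf γ x then V3.o else V3.z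

variable {R : W → W → Prop} {Vf : W → ℕ → Prop}

lemma kv_eq_t {x : W} {γ : MF} (h : Tr R Vf (.box γ) x) : kv R Vf x γ = V3.t := by
  simp [kv, h]

lemma kv_t_iff (hrefl : ∀ x, R x x) {x : W} {γ : MF} :
    kv R Vf x γ = V3.t ↔ Tr R Vf (.box γ) x := by
  constructor
  · intro h
    by_contra hb
    by_cases hg : Tr R Vf γ x <;> simp [kv, hb, hg] at h
  · exact kv_eq_t

lemma kv_des_iff (hrefl : ∀ x, R x x) {x : W} {γ : MF} :
    kv R Vf x γ ∈ Des ↔ Tr R Vf γ x := by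
  by_cases hb : Tr R Vf (.box γ) x
  · have : Tr R Vf γ x := hb x (hrefl x)
    simp [kv, hb, this, Des]
  · by_cases hg : Tr R Vf γ x <;> simp [kv, hb, hg, Des]

lemma kv_z_iff (hrefl : ∀ x, R x x) {x : W} {γ : MF} :
    kv R Vf x γ = V3.z ↔ ¬ Tr R Vf γ x := by
  by_cases hb : Tr R Vf (.box γ) x
  · have : Tr R Vf γ x := hb x (hrefl x)
    simp [kv, hb, this]
  · by_cases hg : Tr R Vf γ x <;> simp [kv, hb, hg]

lemma kv_o_iff (hrefl : ∀ x, R x x) {x : W} {γ : MF} :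
    kv R Vf x γ = V3.o ↔ (Tr R Vf γ x ∧ ¬ Tr R Vf (.box γ) x) := by
  by_cases hb : Tr R Vf (.box γ) x
  · have : Tr R Vf γ x := hb x (hrefl x)
    simp [kv, hb, this]
  · by_cases hg : Tr R Vf γ x <;> simp [kv, hb, hg]

lemma kv_isVal (hrefl : ∀ x, R x x)
    (htrans : ∀ {x y z : W}, R x y → R y z → R x z) (x : W) : IsVal (kv R Vf x) := by
  refine ⟨?_, ?_, ?_, ?_, ?_⟩
  · -- neg
    intro a
    by_cases ha : Tr R Vf a x
    · have h1 : kv R Vf x (.neg a) = V3.z := by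
        rw [kv_z_iff hrefl]; simp only [Tr]; exact not_not_intro ha
      have h2 : kv R Vf x a ∈ Des := (kv_des_iff hrefl).mpr ha
      rcases (mem_Des_iff _).mp h2 with h | h <;> rw [h, h1] <;> simp [negOp]
    · have h2 : kv R Vf x a = V3.z := (kv_z_iff hrefl).mpr ha
      have h1 : kv R Vf x (.neg a) ∈ Des := by
        rw [kv_des_iff hrefl]; simp only [Tr]; exact ha
      rw [h2]
      rcases (mem_Des_iff _).mp h1 with h | h <;> rw [h] <;> simp [negOp]
  · -- box
    intro a
    by_cases hb : Tr R Vf (.box a) x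
    · have h1 : kv R Vf x a = V3.t := kv_eq_t hb
      have h2 : kv R Vf x (.box a) = V3.t := by
        apply kv_eq_t
        intro y hxy z hyz
        exact hb z (htrans hxy hyz)
      rw [h1, h2]; simp [boxOp]
    · have h2 : kv R Vf x (.box a) = V3.z := by
        rw [kv_z_iff hrefl]; exact hb
      have h1 : kv R Vf x a ≠ V3.t := fun h => hb ((kv_t_iff hrefl).mp h)
      rw [h2]
      cases h : kv R Vf x a <;> simp [boxOp] <;> exact h1 h
  · -- imp
    intro a b
    by_cases hb : Tr R Vf b x
    · by_cases hbb : Tr R Vf (.box b) x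
      · have h1 : kv R Vf x b = V3.t := kv_eq_t hbb
        have h2 : kv R Vf x (.imp a b) = V3.t := by
          apply kv_eq_t
          intro y hxy
          exact fun _ => hbb y hxy
        rw [h1, h2]
        cases kv R Vf x a <;> simp [impOp]
      · have h1 : kv R Vf x b = V3.o := (kv_o_iff hrefl).mpr ⟨hb, hbb⟩
        have htr : Tr R Vf (.imp a b) x := fun _ => hb
        by_cases hba : Tr R Vf (.box a) x
        · have h2 : kv R Vf x a = V3.t := kv_eq_t hba
          have h3 : kv R Vf x (.imp a b) = V3.o := by
            rw [kv_o_iff hrefl]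
            refine ⟨htr, fun hbi => hbb ?_⟩
            intro y hxy
            exact hbi y hxy (hba y hxy)
          rw [h1, h2, h3]; simp [impOp]
        · have h2 : kv R Vf x a ≠ V3.t := fun h => hba ((kv_t_iff hrefl).mp h)
          have h3 : kv R Vf x (.imp a b) ∈ Des := (kv_des_iff hrefl).mpr htr
          rcases (mem_Des_iff _).mp h3 with h | h <;>
            cases ha : kv R Vf x a <;> rw [h, h1] <;> simp [impOp] <;> exact h2 ha
    · have h1 : kv R Vf x b = V3.z := (kv_z_iff hrefl).mpr hb
      by_cases ha : Tr R Vf a x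
      · have h2 : kv R Vf x a ∈ Des := (kv_des_iff hrefl).mpr ha
        have h3 : kv R Vf x (.imp a b) = V3.z := by
          rw [kv_z_iff hrefl]
          simp only [Tr]
          exact fun h => hb (h ha)
        rcases (mem_Des_iff _).mp h2 with h | h <;> rw [h, h1, h3] <;> simp [impOp]
      · have h2 : kv R Vf x a = V3.z := (kv_z_iff hrefl).mpr ha
        have h3 : kv R Vf x (.imp a b) ∈ Des := by
          rw [kv_des_iff hrefl]
          exact fun h => absurd h ha
        rw [h1, h2]
        rcases (mem_Des_iff _).mp h3 with h | h <;> rw [h] <;> simp [impOp]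
  · -- dis
    intro a b
    by_cases hba : Tr R Vf (.box a) x
    · have h1 : kv R Vf x a = V3.t := kv_eq_t hba
      have h2 : kv R Vf x (.dis a b) = V3.t := by
        apply kv_eq_t
        intro y hxy
        exact Or.inl (hba y hxy)
      rw [h1, h2]
      cases kv R Vf x b <;> simp [disOp]
    · by_cases hbb : Tr R Vf (.box b) x
      · have h1 : kv R Vf x b = V3.t := kv_eq_t hbb
        have h2 : kv R Vf x (.dis a b) = V3.t := by
          apply kv_eq_t
          intro y hxy
          exact Or.inr (hbb y hxy)
        rw [h1, h2]
        have h3 : kv R Vf x a ≠ V3.t := fun h => hba ((kv_t_iff hrefl).mp h)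
        cases ha : kv R Vf x a <;> simp [disOp] <;> exact h3 ha
      · have ha' : kv R Vf x a ≠ V3.t := fun h => hba ((kv_t_iff hrefl).mp h)
        have hb' : kv R Vf x b ≠ V3.t := fun h => hbb ((kv_t_iff hrefl).mp h)
        by_cases ha : Tr R Vf a x
        · have h1 : kv R Vf x a = V3.o := (kv_o_iff hrefl).mpr ⟨ha, hba⟩
          have h3 : kv R Vf x (.dis a b) ∈ Des := by
            rw [kv_des_iff hrefl]; exact Or.inl ha
          rw [h1]
          rcases (mem_Des_iff _).mp h3 with h | h <;> cases hbv : kv R Vf x b <;>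
            rw [h] <;> simp [disOp] <;> exact hb' hbv
        · have h1 : kv R Vf x a = V3.z := (kv_z_iff hrefl).mpr ha
          by_cases hb : Tr R Vf b x
          · have h2 : kv R Vf x b = V3.o := (kv_o_iff hrefl).mpr ⟨hb, hbb⟩
            have h3 : kv R Vf x (.dis a b) ∈ Des := by
              rw [kv_des_iff hrefl]; exact Or.inr hb
            rw [h1, h2]
            rcases (mem_Des_iff _).mp h3 with h | h <;> rw [h] <;> simp [disOp]
          · have h2 : kv R Vf x b = V3.z := (kv_z_iff hrefl).mpr hb
            have h3 : kv R Vf x (.dis a b) = V3.z := by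
              rw [kv_z_iff hrefl]
              simp only [Tr]
              rintro (h | h)
              exacts [ha h, hb h]
            rw [h1, h2, h3]; simp [disOp]
  · -- con
    intro a b
    by_cases ha : Tr R Vf a x
    · by_cases hb : Tr R Vf b x
      · by_cases hba : Tr R Vf (.box a) x
        · by_cases hbb : Tr R Vf (.box b) x
          · have h1 : kv R Vf x a = V3.t := kv_eq_t hba
            have h2 : kv R Vf x b = V3.t := kv_eq_t hbb
            have h3 : kv R Vf x (.con a b) = V3.t := by
              apply kv_eq_t
              intro y hxy
              exact ⟨hba y hxy, hbb y hxy⟩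
            rw [h1, h2, h3]; simp [conOp]
          · have h1 : kv R Vf x a = V3.t := kv_eq_t hba
            have h2 : kv R Vf x b = V3.o := (kv_o_iff hrefl).mpr ⟨hb, hbb⟩
            have h3 : kv R Vf x (.con a b) = V3.o := by
              rw [kv_o_iff hrefl]
              refine ⟨⟨ha, hb⟩, fun hbc => hbb fun y hxy => (hbc y hxy).2⟩
            rw [h1, h2, h3]; simp [conOp]
        · have h1 : kv R Vf x (.con a b) = V3.o := by
            rw [kv_o_iff hrefl]
            refine ⟨⟨ha, hb⟩, fun hbc => hba fun y hxy => (hbc y hxy).1⟩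
          have h2 : kv R Vf x a = V3.o := (kv_o_iff hrefl).mpr ⟨ha, hba⟩
          have h3 : kv R Vf x b ∈ Des := (kv_des_iff hrefl).mpr hb
          rcases (mem_Des_iff _).mp h3 with h | h <;> rw [h1, h2, h] <;> simp [conOp]
      · have h2 : kv R Vf x b = V3.z := (kv_z_iff hrefl).mpr hb
        have h3 : kv R Vf x (.con a b) = V3.z := by
          rw [kv_z_iff hrefl]
          exact fun h => hb h.2
        rw [h2, h3]
        cases kv R Vf x a <;> simp [conOp]
    · have h2 : kv R Vf x a = V3.z := (kv_z_iff hrefl).mpr ha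
      have h3 : kv R Vf x (.con a b) = V3.z := by
        rw [kv_z_iff hrefl]
        exact fun h => ha h.1
      rw [h2, h3]
      cases kv R Vf x b <;> simp [conOp]

lemma kv_mem_level (hrefl : ∀ x, R x x)
    (htrans : ∀ {x y z : W}, R x y → R y z → R x z) :
    ∀ (k : ℕ) (x : W), kv R Vf x ∈ LevelS4 k := by
  intro k
  induction k with
  | zero => intro x; exact kv_isVal hrefl htrans x
  | succ n ih =>
      intro x
      refine ⟨ih x, fun α hα => ?_⟩
      rw [kv_t_iff hrefl]
      intro y hxy
      exact (kv_des_iff hrefl).mp (hα (kv R Vf y) (ih y))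

lemma kv_mem_LVS4 (hrefl : ∀ x, R x x)
    (htrans : ∀ {x y z : W}, R x y → R y z → R x z) (x : W) : kv R Vf x ∈ LVS4 :=
  mem_LVS4_iff.mpr fun k => kv_mem_level hrefl htrans k x

/-! ### Properties of PLV -/

lemma PLV_isPVal {Λ : Set MF} {v : MF → V3} (h : v ∈ PLV Λ) : IsPVal Λ v := by
  obtain ⟨S, hS, hv⟩ := h
  exact hS.1 v hv

lemma PLV_witness {Λ : Set MF} {v : MF → V3} (h : v ∈ PLV Λ) {α : MF} (hα : α ∈ Λ)
    (ho : v α = V3.o) :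
    ∃ w ∈ PLV Λ, w α = V3.z ∧ ∀ β ∈ Λ, v β = V3.t → w β = V3.t := by
  obtain ⟨S, hS, hv⟩ := h
  obtain ⟨w, hw, hwz, hpres⟩ := hS.2 v hv α hα ho
  exact ⟨w, ⟨S, hS, hw⟩, hwz, hpres⟩

/-! ### The canonical Kripke model over PLV(Λ) -/

/-- Worlds of the canonical model: members of PLV(Λ). -/
def PW (Λ : Set MF) : Type := {u : MF → V3 // u ∈ PLV Λ}

/-- Accessibility. -/
def PR (Λ : Set MF) : PW Λ → PW Λ → Prop :=
  fun u u' => ∀ β ∈ Λ, u.1 β = V3.t → u'.1 β = V3.t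

/-- Atomic valuation. -/
def PVf (Λ : Set MF) : PW Λ → ℕ → Prop := fun u n => u.1 (MF.var n) ∈ Des

lemma PR_refl (Λ : Set MF) : ∀ x : PW Λ, PR Λ x x := fun _ _ _ h => h

lemma PR_trans (Λ : Set MF) : ∀ {x y z : PW Λ}, PR Λ x y → PR Λ y z → PR Λ x z :=
  fun hxy hyz β hβ h => hyz β hβ (hxy β hβ h)

/-- Truth lemma for the canonical model. -/
lemma truth_lemma {Λ : Set MF} (hcl : SubClosed Λ) :
    ∀ γ : MF, γ ∈ Λ → ∀ u : PW Λ, Tr (PR Λ) (PVf Λ) γ u ↔ u.1 γ ∈ Des := by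
  intro γ
  induction γ with
  | var n => intro _ u; exact Iff.rfl
  | neg a iha =>
      intro hmem u
      have ha : a ∈ Λ := hcl.1 a hmem
      have hop : u.1 (.neg a) ∈ negOp (u.1 a) := (PLV_isPVal u.2).1 a hmem
      have hT : Tr (PR Λ) (PVf Λ) (.neg a) u ↔ ¬ (u.1 a ∈ Des) := by
        simp only [Tr]; exact not_congr (iha ha u)
      rw [hT]
      cases hA : u.1 a <;> rw [hA] at hop <;>
        simp [negOp, Des] at hop ⊢ <;> first
          | (rcases hop with h | h <;> simp [h])
          | simp [hop]
  | box a iha =>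
      intro hmem u
      have ha : a ∈ Λ := hcl.2.1 a hmem
      have hop : u.1 (.box a) ∈ boxOp (u.1 a) := (PLV_isPVal u.2).2.1 a hmem
      have hT : Tr (PR Λ) (PVf Λ) (.box a) u ↔ ∀ u', PR Λ u u' → u'.1 a ∈ Des := by
        simp only [Tr]
        exact forall_congr' fun u' => imp_congr Iff.rfl (iha ha u')
      rw [hT]
      cases hA : u.1 a <;> rw [hA] at hop <;> simp [boxOp] at hop
      · -- u.1 a = z : both sides false
        rw [hop]
        simp only [Des]
        constructor
        · intro h
          have := h u (PR_refl Λ u)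
          rw [hA] at this
          simp [Des] at this
        · intro h; simp at h
      · -- u.1 a = o : both sides false
        rw [hop]
        constructor
        · intro h
          obtain ⟨w, hwPLV, hwz, hpres⟩ := PLV_witness u.2 ha hA
          have h2 : w a ∈ Des := h ⟨w, hwPLV⟩ hpres
          rw [hwz] at h2
          simp [Des] at h2
        · intro h; simp [Des] at h
      · -- u.1 a = t : both sides true
        rw [hop]
        constructor
        · intro _; simp [Des]
        · intro _ u' hR
          have := hR a ha hA
          rw [this]; simp [Des]
  | imp a b iha ihb =>
      intro hmem u
      have ha : a ∈ Λ := (hcl.2.2.1 a b hmem).1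
      have hb : b ∈ Λ := (hcl.2.2.1 a b hmem).2
      have hop : u.1 (.imp a b) ∈ impOp (u.1 a) (u.1 b) := (PLV_isPVal u.2).2.2.1 a b hmem
      have hT : Tr (PR Λ) (PVf Λ) (.imp a b) u ↔ (u.1 a ∈ Des → u.1 b ∈ Des) := by
        simp only [Tr]; exact imp_congr (iha ha u) (ihb hb u)
      rw [hT]
      cases hA : u.1 a <;> cases hB : u.1 b <;> rw [hA, hB] at hop <;>
        simp [impOp, Des] at hop ⊢ <;> first
          | (rcases hop with h | h <;> simp [h])
          | simp [hop]
  | dis a b iha ihb =>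
      intro hmem u
      have ha : a ∈ Λ := (hcl.2.2.2.1 a b hmem).1
      have hb : b ∈ Λ := (hcl.2.2.2.1 a b hmem).2
      have hop : u.1 (.dis a b) ∈ disOp (u.1 a) (u.1 b) := (PLV_isPVal u.2).2.2.2.1 a b hmem
      have hT : Tr (PR Λ) (PVf Λ) (.dis a b) u ↔ (u.1 a ∈ Des ∨ u.1 b ∈ Des) := by
        simp only [Tr]; exact or_congr (iha ha u) (ihb hb u)
      rw [hT]
      cases hA : u.1 a <;> cases hB : u.1 b <;> rw [hA, hB] at hop <;>
        simp [disOp, Des] at hop ⊢ <;> first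
          | (rcases hop with h | h <;> simp [h])
          | simp [hop]
  | con a b iha ihb =>
      intro hmem u
      have ha : a ∈ Λ := (hcl.2.2.2.2 a b hmem).1
      have hb : b ∈ Λ := (hcl.2.2.2.2 a b hmem).2
      have hop : u.1 (.con a b) ∈ conOp (u.1 a) (u.1 b) := (PLV_isPVal u.2).2.2.2.2 a b hmem
      have hT : Tr (PR Λ) (PVf Λ) (.con a b) u ↔ (u.1 a ∈ Des ∧ u.1 b ∈ Des) := by
        simp only [Tr]; exact and_congr (iha ha u) (ihb hb u)
      rw [hT]
      cases hA : u.1 a <;> cases hB : u.1 b <;> rw [hA, hB] at hop <;>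
        simp [conOp, Des] at hop ⊢ <;> first
          | (rcases hop with h | h <;> simp [h])
          | simp [hop]

/-- First inclusion: PLV(Λ) ⊆ PLV'(Λ). -/
lemma PLV_subset_PLV' (Λ : Set MF) (hcl : SubClosed Λ) : PLV Λ ⊆ PLV' Λ := by
  intro v hv
  refine ⟨PLV_isPVal hv, ?_⟩
  intro α hα ho
  obtain ⟨u0, hu0PLV, hu0z, hu0pres⟩ := PLV_witness hv hα ho
  let x : PW Λ := ⟨u0, hu0PLV⟩
  refine ⟨kv (PR Λ) (PVf Λ) x, kv_mem_LVS4 (PR_refl Λ) (PR_trans Λ) x, ?_, ?_⟩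
  · rw [kv_z_iff (PR_refl Λ)]
    intro hTα
    have h2 : u0 α ∈ Des := (truth_lemma hcl α hα x).mp hTα
    rw [hu0z] at h2
    simp [Des] at h2
  · intro β hβ ht
    apply kv_eq_t
    intro y hxy
    apply (truth_lemma hcl β hβ y).mpr
    have : y.1 β = V3.t := hxy β hβ (hu0pres β hβ ht)
    rw [this]; simp [Des]

/-! ### Second inclusion: PLV'(Λ) ⊆ PLV(Λ) -/

/-- Conjunction of boxed formulas over a (nonempty) list. -/
def bc : List MF → MF
  | [] => MF.var 0
  | [b] => MF.box b
  | b :: bs => MF.con (MF.box b) (bc bs)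

lemma bc_eq_t {w : MF → V3} (hw : IsVal w) :
    ∀ l : List MF, l ≠ [] → (∀ β ∈ l, w β = V3.t) → w (bc l) = V3.t := by
  intro l
  induction l with
  | nil => intro h; exact absurd rfl h
  | cons b bs ih =>
      intro _ hall
      have hb : w (MF.box b) = V3.t := by
        have := hw.2.1 b
        rw [hall b (by simp)] at this
        simpa [boxOp] using this
      cases bs with
      | nil => simpa [bc] using hb
      | cons c cs =>
          have htl : w (bc (c :: cs)) = V3.t :=
            ih (by simp) (fun β hβ => hall β (by simp [hβ]))
          have := hw.2.2.2.2 (MF.box b) (bc (c :: cs))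
          rw [hb, htl] at this
          simpa [bc, conOp] using this

lemma bc_des {u : MF → V3} (hu : IsVal u) :
    ∀ l : List MF, l ≠ [] → u (bc l) ∈ Des → ∀ β ∈ l, u β = V3.t := by
  intro l
  induction l with
  | nil => intro h; exact absurd rfl h
  | cons b bs ih =>
      intro _ hdes
      have hbbox : ∀ β ∈ (b :: bs), β = b ∨ β ∈ bs := by simp
      have hboxval : u (MF.box b) ∈ boxOp (u b) := hu.2.1 b
      cases bs with
      | nil =>
          intro β hβ
          have hβb : β = b := by simpa using hβ
          subst hβb
          rw [show bc [β] = MF.box β from rfl] at hdes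
          cases hB : u β <;> rw [hB] at hboxval <;>
            simp [boxOp] at hboxval <;> rw [hboxval] at hdes <;>
            first
              | rfl
              | simp [Des] at hdes
      | cons c cs =>
          have hconval : u (bc (b :: c :: cs)) ∈ conOp (u (MF.box b)) (u (bc (c :: cs))) :=
            hu.2.2.2.2 (MF.box b) (bc (c :: cs))
          -- u (box b) must be t
          have hub : u b = V3.t := by
            by_contra hne
            have hz : u (MF.box b) = V3.z := by
              cases hB : u b <;> rw [hB] at hboxval
              · simpa [boxOp] using hboxval
              · simpa [boxOp] using hboxval
              · exact absurd hB hne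
            rw [hz] at hconval
            have hzz : u (bc (b :: c :: cs)) = V3.z := by
              cases u (bc (c :: cs)) <;> simpa [conOp] using hconval
            rw [hzz] at hdes
            simp [Des] at hdes
          have hboxt : u (MF.box b) = V3.t := by
            rw [hub] at hboxval; simpa [boxOp] using hboxval
          rw [hboxt] at hconval
          have htl : u (bc (c :: cs)) ∈ Des := by
            by_contra hnd
            have hC : u (bc (c :: cs)) = V3.z := (not_mem_Des_iff _).mp hnd
            rw [hC] at hconval
            simp [conOp] at hconval
            rw [hconval] at hdes
            simp [Des] at hdes
          intro β hβ
          rcases List.mem_cons.mp hβ with h | h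
          · subst h; exact hub
          · exact ih (by simp) htl β h

open Classical in
/-- Key step: a valuation of level k+1 taking value 1 at α has, at the previous
level, a witness taking value 0 at α and preserving the 2s over Λ. -/
lemma keyStep (Λ : Set MF) (hfin : Λ.Finite) {k : ℕ} {w : MF → V3}
    (hw : w ∈ LevelS4 (k + 1)) {α : MF} (ho : w α = V3.o) :
    ∃ u ∈ LevelS4 k, u α = V3.z ∧ ∀ β ∈ Λ, w β = V3.t → u β = V3.t := by
  classical
  set l := (hfin.toFinset.filter (fun β => w β = V3.t)).toList with hl
  have hmeml : ∀ β, β ∈ l ↔ β ∈ Λ ∧ w β = V3.t := by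
    intro β
    simp [hl, Finset.mem_filter, hfin.mem_toFinset]
  have hwv : IsVal w := level_isVal hw
  by_cases hnil : l = []
  · have hne : ¬ ∀ u ∈ LevelS4 k, u α ∈ Des := by
      intro h
      have := hw.2 α h
      rw [ho] at this
      exact V3.noConfusion this
    push_neg at hne
    obtain ⟨u, huk, hud⟩ := hne
    refine ⟨u, huk, (not_mem_Des_iff _).mp hud, ?_⟩
    intro β hβ ht
    exact absurd ((hmeml β).mpr ⟨hβ, ht⟩) (by simp [hnil])
  · have h1 : w (bc l) = V3.t := bc_eq_t hwv l hnil (fun β hβ => ((hmeml β).mp hβ).2)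
    have h2 : w (MF.imp (bc l) α) = V3.o := by
      have := hwv.2.2.1 (bc l) α
      rw [h1, ho] at this
      simpa [impOp] using this
    have hne : ¬ ∀ u ∈ LevelS4 k, u (MF.imp (bc l) α) ∈ Des := by
      intro h
      have := hw.2 (MF.imp (bc l) α) h
      rw [h2] at this
      exact V3.noConfusion this
    push_neg at hne
    obtain ⟨u, huk, hud⟩ := hne
    have huz : u (MF.imp (bc l) α) = V3.z := (not_mem_Des_iff _).mp hud
    have huv : IsVal u := level_isVal huk
    have himp := huv.2.2.1 (bc l) α
    rw [huz] at himp
    have key : u α = V3.z ∧ u (bc l) ∈ Des := by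
      cases hA : u (bc l) <;> cases hB : u α <;> rw [hA, hB] at himp <;>
        simp_all [impOp, Des]
    refine ⟨u, huk, key.1, ?_⟩
    intro β hβ ht
    exact bc_des huv l hnil key.2 β ((hmeml β).mpr ⟨hβ, ht⟩)

/-- The set of partial valuations agreeing on Λ with some valuation in every level. -/
def Sset (Λ : Set MF) : Set (MF → V3) :=
  {v | ∀ k, ∃ u ∈ LevelS4 k, ∀ β ∈ Λ, v β = u β}

lemma Sset_isPVal {Λ : Set MF} (hcl : SubClosed Λ) {v : MF → V3} (hv : v ∈ Sset Λ) :
    IsPVal Λ v := by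
  obtain ⟨u, hu0, hagree⟩ := hv 0
  have hu : IsVal u := hu0
  refine ⟨?_, ?_, ?_, ?_, ?_⟩
  · intro a ha
    rw [hagree _ ha, hagree _ (hcl.1 a ha)]
    exact hu.1 a
  · intro a ha
    rw [hagree _ ha, hagree _ (hcl.2.1 a ha)]
    exact hu.2.1 a
  · intro a b hab
    rw [hagree _ hab, hagree _ (hcl.2.2.1 a b hab).1, hagree _ (hcl.2.2.1 a b hab).2]
    exact hu.2.2.1 a b
  · intro a b hab
    rw [hagree _ hab, hagree _ (hcl.2.2.2.1 a b hab).1, hagree _ (hcl.2.2.2.1 a b hab).2]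
    exact hu.2.2.2.1 a b
  · intro a b hab
    rw [hagree _ hab, hagree _ (hcl.2.2.2.2 a b hab).1, hagree _ (hcl.2.2.2.2 a b hab).2]
    exact hu.2.2.2.2 a b

lemma LVS4_sub_Sset {Λ : Set MF} {w : MF → V3} (hw : w ∈ LVS4) : w ∈ Sset Λ :=
  fun k => ⟨w, mem_LVS4_iff.mp hw k, fun _ _ => rfl⟩

instance : Fintype V3 :=
  ⟨⟨{V3.z, V3.o, V3.t}, by decide⟩, fun x => by cases x <;> decide⟩

lemma Sset_witness (Λ : Set MF) (hfin : Λ.Finite) {v : MF → V3} (hv : v ∈ Sset Λ)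
    {α : MF} (hα : α ∈ Λ) (ho : v α = V3.o) :
    ∃ z ∈ Sset Λ, z α = V3.z ∧ ∀ β ∈ Λ, v β = V3.t → z β = V3.t := by
  classical
  have hz : ∀ k, ∃ u, u ∈ LevelS4 k ∧ u α = V3.z ∧
      ∀ β ∈ Λ, v β = V3.t → u β = V3.t := by
    intro k
    obtain ⟨w, hwk, hagree⟩ := hv (k + 1)
    have hwo : w α = V3.o := by rw [← hagree α hα]; exact ho
    obtain ⟨u, huk, huz, hpres⟩ := keyStep Λ hfin hwk hwo
    exact ⟨u, huk, huz, fun β hβ ht => hpres β hβ (by rw [← hagree β hβ]; exact ht)⟩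
  choose z hzk hzα hzpres using hz
  obtain ⟨p, hp⟩ :=
    Finite.exists_infinite_fiber (fun k => (fun β : ↥hfin.toFinset => z k β.1))
  have hpInf : ((fun k => (fun β : ↥hfin.toFinset => z k β.1)) ⁻¹' {p}).Infinite :=
    Set.infinite_coe_iff.mp hp
  obtain ⟨k0, hk0⟩ := hpInf.nonempty
  have hk0' : (fun β : ↥hfin.toFinset => z k0 β.1) = p := hk0
  refine ⟨z k0, ?_, hzα k0, fun β hβ ht => hzpres k0 β hβ ht⟩
  intro k
  obtain ⟨j, hjmem, hjk⟩ := hpInf.exists_gt k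
  have hj' : (fun β : ↥hfin.toFinset => z j β.1) = p := hjmem
  refine ⟨z j, level_antitone (le_of_lt hjk) (hzk j), ?_⟩
  intro β hβ
  have hβf : β ∈ hfin.toFinset := hfin.mem_toFinset.mpr hβ
  exact (congrFun (hj'.trans hk0'.symm) ⟨β, hβf⟩).symm

end Aux

/-- PLV(Λ) = PLV'(Λ) for finite nonempty subformula-closed Λ. -/
theorem s4_PLV_eq_PLV' (Λ : Set MF) (hfin : Λ.Finite) (hne : Λ.Nonempty)
    (hcl : SubClosed Λ) :
    PLV Λ = PLV' Λ := by
  apply Set.Subset.antisymm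
  · exact PLV_subset_PLV' Λ hcl
  · intro v hv
    refine Set.mem_sUnion.mpr ⟨PLV' Λ ∪ Sset Λ, ⟨?_, ?_⟩, Or.inl hv⟩
    · intro u hu
      rcases hu with hu | hu
      · exact hu.1
      · exact Sset_isPVal hcl hu
    · intro u hu α hα ho
      rcases hu with hu | hu
      · obtain ⟨w, hwLV, hwz, hpres⟩ := hu.2 α hα ho
        exact ⟨w, Or.inr (LVS4_sub_Sset hwLV), hwz, hpres⟩
      · obtain ⟨zz, hzS, hzz, hpres⟩ := Sset_witness Λ hfin hu hα ho
        exact ⟨zz, Or.inr hzS, hzz, hpres⟩
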